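/- Let φ : ℕ → (0,∞) be monotonically increasing with φ(n) → ∞ as n → ∞. Then the set E_max^φ = {x ∈ [0,1] : liminf_{n→∞} r_n(x)/φ(n) = 0 and limsup_{n→∞} r_n(x)/φ(n) = +∞} is either residual in [0,1] or empty. -/

import Mathlib

/-!
If `n ≤ C φ(n)` eventually, then `r_n(x)/φ(n) ≤ n/φ(n)` is eventually bounded, so no `x` has
limsup `+∞` and `E_max^φ` is empty. Otherwise, since `r_n(x)` only depends on the first `n`
digits of `x`, every dyadic interval contains a dyadic subinterval on which `r_n/φ(n)` is small
for some large `n` (append many `0`'s) and one on which it is large (append `1`'s up to a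
length `n` with `n ≫ φ(n)`). Hence both conditions hold on open dense subsets of `[0,1]`, and
`E_max^φ` contains a countable intersection of such sets.
-/

open Filter Set

/-- The `k`-th binary digit (for `k ≥ 1`) of a real number `x`,
namely `x_k = ⌊x * 2^k⌋ mod 2`, so that `x = Σ_{k ≥ 1} x_k / 2^k` for `x ∈ [0,1)`. -/
noncomputable def dyadicDigit (x : ℝ) (k : ℕ) : ℕ :=
  ⌊x * 2 ^ k⌋.toNat % 2

/-- The run-length function: `runLen x n` is the length of the longest run of `1`'s
among the first `n` dyadic digits `x_1, …, x_n` of `x`. -/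
noncomputable def runLen (x : ℝ) (n : ℕ) : ℕ :=
  sSup {ℓ : ℕ | ∃ i, i + ℓ ≤ n ∧ ∀ j < ℓ, dyadicDigit x (i + j + 1) = 1}

/-- The exceptional set `E_max^φ` of points of `[0,1]` where `r_n(x)/φ(n)` has
liminf `0` and limsup `+∞`. -/
noncomputable def Emax (φ : ℕ → ℝ) : Set ℝ :=
  {x ∈ Set.Icc (0 : ℝ) 1 |
    atTop.liminf (fun n => ((runLen x n / φ n : ℝ) : EReal)) = 0 ∧
    atTop.limsup (fun n => ((runLen x n / φ n : ℝ) : EReal)) = ⊤}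

def dyadicInterval (n N : ℕ) : Set ℝ :=
  Ioo (N / 2 ^ n) ((N + 1) / 2 ^ n)

lemma dyadicDigit_eq_one_iff_testBit (x : ℝ) {k n : ℕ} (hk : k ≤ n) :
    dyadicDigit x k = 1 ↔ ⌊x * 2 ^ n⌋₊.testBit (n - k) := by
  have hpow : x * 2 ^ k = x * 2 ^ n / ((2 ^ (n - k) : ℕ) : ℝ) := by
    rw [eq_div_iff (by positivity), Nat.cast_pow, Nat.cast_ofNat, mul_assoc, ← pow_add,
      Nat.add_sub_cancel' hk]
  rw [dyadicDigit, Int.floor_toNat, hpow, Nat.floor_div_natCast, Nat.testBit_eq_decide_div_mod_eq,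
    decide_eq_true_iff]

lemma floor_mul_two_pow_of_mem_dyadicInterval {x : ℝ} {n N : ℕ} (hx : x ∈ dyadicInterval n N) :
    ⌊x * 2 ^ n⌋₊ = N := by
  have h2n : (0 : ℝ) < 2 ^ n := by positivity
  obtain ⟨hl, hu⟩ := hx
  rw [div_lt_iff₀ h2n] at hl
  rw [lt_div_iff₀ h2n] at hu
  exact (Nat.floor_eq_iff ((Nat.cast_nonneg N).trans hl.le)).2 ⟨hl.le, hu⟩

-- `2 ^ t * N + r` appends the `t` binary digits of `r` to those of `N`.
lemma dyadicInterval_subset {m t N r : ℕ} (hr : r < 2 ^ t) :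
    dyadicInterval (m + t) (2 ^ t * N + r) ⊆ dyadicInterval m N := by
  have h2t : (0 : ℝ) < 2 ^ t := by positivity
  have hr' : (r : ℝ) + 1 ≤ 2 ^ t := by exact_mod_cast hr
  have h2m : (0 : ℝ) < 2 ^ m := by positivity
  refine Ioo_subset_Ioo ?_ ?_ <;> rw [div_le_div_iff₀ (by positivity) (by positivity), pow_add] <;>
    push_cast <;> nlinarith

lemma nonempty_dyadicInterval (n N : ℕ) : (dyadicInterval n N).Nonempty :=
  nonempty_Ioo.2 (by gcongr; linarith)

lemma exists_dyadicInterval_subset {a b : ℝ} (ha : 0 ≤ a) (hab : a < b) :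
    ∃ m N, dyadicInterval m N ⊆ Ioo a b := by
  obtain ⟨m, hm⟩ : ∃ m : ℕ, 2 / (b - a) < 2 ^ m := pow_unbounded_of_one_lt _ (by norm_num)
  have h2m : (0 : ℝ) < 2 ^ m := by positivity
  have hm' : 2 < (b - a) * 2 ^ m := by rwa [div_lt_iff₀' (by linarith)] at hm
  refine ⟨m, ⌊a * 2 ^ m⌋₊ + 1, Ioo_subset_Ioo ?_ ?_⟩
  · rw [le_div_iff₀ h2m]; push_cast; exact (Nat.lt_floor_add_one _).le
  · rw [div_le_iff₀ h2m]; push_cast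
    nlinarith [Nat.floor_le (mul_nonneg ha h2m.le)]

lemma runLen_le_self (x : ℝ) (n : ℕ) : runLen x n ≤ n :=
  csSup_le ⟨0, 0, by simp⟩ fun _ ⟨_, hi, _⟩ => by omega

lemma le_runLen {x : ℝ} {n ℓ i : ℕ} (hin : i + ℓ ≤ n)
    (hd : ∀ j < ℓ, dyadicDigit x (i + j + 1) = 1) : ℓ ≤ runLen x n :=
  le_csSup ⟨n, fun _ ⟨_, hi, _⟩ => by omega⟩ ⟨i, hin, hd⟩

lemma runLen_le_of_dyadicDigit_ne_one {x : ℝ} {m n : ℕ}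
    (h : ∀ k, m < k → k ≤ n → dyadicDigit x k ≠ 1) : runLen x n ≤ m := by
  refine csSup_le ⟨0, 0, by simp⟩ fun ℓ ⟨i, hi, hd⟩ => ?_
  by_contra! hm
  have hlast := hd (ℓ - 1) (by omega)
  rw [show i + (ℓ - 1) + 1 = i + ℓ by omega] at hlast
  exact h (i + ℓ) (by omega) hi hlast

lemma dyadicDigit_eq_one_iff_of_mem_dyadicInterval {x : ℝ} {m t N r k : ℕ} (hr : r < 2 ^ t)
    (hx : x ∈ dyadicInterval (m + t) (2 ^ t * N + r)) (hmk : m < k) (hk : k ≤ m + t) :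
    dyadicDigit x k = 1 ↔ r.testBit (m + t - k) := by
  rw [dyadicDigit_eq_one_iff_testBit x hk, floor_mul_two_pow_of_mem_dyadicInterval hx,
    Nat.testBit_two_pow_mul_add N hr,
    if_pos (by omega)]

lemma runLen_le_of_mem_dyadicInterval {x : ℝ} {m t N : ℕ}
    (hx : x ∈ dyadicInterval (m + t) (2 ^ t * N)) : runLen x (m + t) ≤ m := by
  rw [← add_zero (2 ^ t * N)] at hx
  refine runLen_le_of_dyadicDigit_ne_one fun k hmk hk => ?_
  simp [dyadicDigit_eq_one_iff_of_mem_dyadicInterval (Nat.two_pow_pos t) hx hmk hk]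

lemma le_runLen_of_mem_dyadicInterval {x : ℝ} {m t N : ℕ}
    (hx : x ∈ dyadicInterval (m + t) (2 ^ t * N + (2 ^ t - 1))) : t ≤ runLen x (m + t) := by
  refine le_runLen (i := m) le_rfl fun j hj => ?_
  rw [dyadicDigit_eq_one_iff_of_mem_dyadicInterval (Nat.sub_lt (Nat.two_pow_pos t) one_pos) hx
    (by omega) (by omega), Nat.testBit_two_pow_sub_one]
  simp only [decide_eq_true_eq]
  omega

lemma mem_residual_of_forall_dyadicInterval {A : Set ℝ}
    (h : ∀ m N, ∃ n N', dyadicInterval n N' ⊆ dyadicInterval m N ∩ A) :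
    ((↑) : Icc (0 : ℝ) 1 → ℝ) ⁻¹' A ∈ residual (Icc (0 : ℝ) 1) := by
  refine mem_of_superset (residual_of_dense_open
    (isOpen_interior.preimage continuous_subtype_val) ?_) (preimage_mono interior_subset)
  rw [dense_iff_exists_between]
  intro ⟨a, ha, _⟩ ⟨b, _, hb⟩ hab
  obtain ⟨m, N, hab_sub⟩ := exists_dyadicInterval_subset ha hab
  obtain ⟨n, N', hsub⟩ := h m N
  obtain ⟨c, hc⟩ := nonempty_dyadicInterval n N'
  have hcab := hab_sub (hsub hc).1
  exact ⟨⟨c, ha.trans hcab.1.le, hcab.2.le.trans hb⟩,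
    interior_maximal (hsub.trans inter_subset_right) isOpen_Ioo hc, hcab⟩

lemma eventually_residual_frequently_of_dyadicInterval {P : ℕ → ℝ → Prop}
    (h : ∀ q m N, ∃ n ≥ q, ∃ N', dyadicInterval n N' ⊆ dyadicInterval m N ∩ {x | P n x}) :
    ∀ᶠ x : Icc (0 : ℝ) 1 in residual (Icc (0 : ℝ) 1), ∃ᶠ n in atTop, P n x := by
  simp_rw [frequently_atTop]
  refine eventually_countable_forall.2 fun q =>
    mem_residual_of_forall_dyadicInterval (A := {x | ∃ n ≥ q, P n x}) fun m N => ?_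
  obtain ⟨n, hqn, N', hsub⟩ := h q m N
  exact ⟨n, N', hsub.trans (inter_subset_inter_right _ fun x hx => ⟨n, hqn, hx⟩)⟩

section liminf

variable {α : Type*} {f : Filter α} {u : α → ℝ}

lemma liminf_coe_eq_zero (h0 : ∀ᶠ a in f, 0 ≤ u a) (h : ∀ ε > 0, ∃ᶠ a in f, u a < ε) :
    liminf (fun a => (u a : EReal)) f = 0 := by
  refine le_antisymm (EReal.le_of_forall_lt_iff_le.1 fun ε hε => ?_)
    (le_liminf_of_le (by isBoundedDefault) (h0.mono fun _ ha => EReal.coe_nonneg.2 ha))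
  exact liminf_le_of_frequently_le' ((h ε (EReal.coe_pos.1 hε)).mono fun _ ha =>
    EReal.coe_le_coe_iff.2 ha.le)

lemma limsup_coe_eq_top (h : ∀ c : ℝ, ∃ᶠ a in f, c < u a) :
    limsup (fun a => (u a : EReal)) f = ⊤ := by
  refine (EReal.eq_top_iff_forall_lt _).2 fun c => ?_
  calc (c : EReal) < (c + 1 : ℝ) := EReal.coe_lt_coe_iff.2 (lt_add_one c)
    _ ≤ _ := le_limsup_of_frequently_le' ((h (c + 1)).mono fun _ ha =>
      EReal.coe_le_coe_iff.2 ha.le)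

end liminf

variable {φ : ℕ → ℝ}

lemma exists_dyadicInterval_runLen_div_lt (htends : Tendsto φ atTop atTop) {ε : ℝ}
    (hε : 0 < ε) (q m N : ℕ) : ∃ n ≥ q, ∃ N', dyadicInterval n N' ⊆
      dyadicInterval m N ∩ {x | runLen x n / φ n < ε} := by
  obtain ⟨n, hφ, hn⟩ :=
    ((htends.eventually_gt_atTop (m / ε)).and (eventually_ge_atTop (max m q))).exists
  obtain ⟨t, rfl⟩ := Nat.exists_eq_add_of_le (le_of_max_le_left hn)
  have hφpos : 0 < φ (m + t) := lt_of_le_of_lt (by positivity) hφ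
  refine ⟨m + t, le_of_max_le_right hn, 2 ^ t * N, subset_inter
    (by simpa using dyadicInterval_subset (m := m) (N := N) (Nat.two_pow_pos t)) fun x hx => ?_⟩
  have hrun : (runLen x (m + t) : ℝ) ≤ m := by exact_mod_cast runLen_le_of_mem_dyadicInterval hx
  rw [div_lt_iff₀ hε] at hφ
  rw [mem_ofPred_eq, div_lt_iff₀ hφpos]
  linarith

lemma exists_dyadicInterval_lt_runLen_div (htends : Tendsto φ atTop atTop)
    (hfreq : ∀ C : ℝ, ∃ᶠ n : ℕ in atTop, C * φ n < n) (c : ℝ) (q m N : ℕ) :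
    ∃ n ≥ q, ∃ N', dyadicInterval n N' ⊆ dyadicInterval m N ∩ {x | c < runLen x n / φ n} := by
  obtain ⟨n, ⟨hlin, hφ⟩, hn⟩ := (((hfreq (|c| + 1)).and_eventually
    (htends.eventually_ge_atTop (max m 1))).and_eventually (eventually_ge_atTop (max m q))).exists
  obtain ⟨t, rfl⟩ := Nat.exists_eq_add_of_le (le_of_max_le_left hn)
  have hφpos : 0 < φ (m + t) := lt_of_lt_of_le one_pos (le_of_max_le_right hφ)
  refine ⟨m + t, le_of_max_le_right hn, 2 ^ t * N + (2 ^ t - 1), subset_inter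
    (dyadicInterval_subset (Nat.sub_lt (Nat.two_pow_pos t) one_pos)) fun x hx => ?_⟩
  have hrun : (t : ℝ) ≤ runLen x (m + t) := by exact_mod_cast le_runLen_of_mem_dyadicInterval hx
  rw [mem_ofPred_eq, lt_div_iff₀ hφpos]
  push_cast at hlin
  nlinarith [le_abs_self c, le_of_max_le_left hφ]

lemma preimage_Emax_mem_residual (htends : Tendsto φ atTop atTop)
    (hfreq : ∀ C : ℝ, ∃ᶠ n : ℕ in atTop, C * φ n < n) :
    ((↑) : Icc (0 : ℝ) 1 → ℝ) ⁻¹' Emax φ ∈ residual (Icc (0 : ℝ) 1) := by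
  have hsmall : ∀ᶠ x : Icc (0 : ℝ) 1 in residual _, ∀ p : ℕ,
      ∃ᶠ n in atTop, runLen x n / φ n < 1 / (p + 1) :=
    eventually_countable_forall.2 fun p => eventually_residual_frequently_of_dyadicInterval
      (exists_dyadicInterval_runLen_div_lt htends (by positivity))
  have hlarge : ∀ᶠ x : Icc (0 : ℝ) 1 in residual _, ∀ p : ℕ,
      ∃ᶠ n in atTop, (p : ℝ) < runLen x n / φ n :=
    eventually_countable_forall.2 fun p => eventually_residual_frequently_of_dyadicInterval
      (exists_dyadicInterval_lt_runLen_div htends hfreq p)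
  filter_upwards [hsmall, hlarge] with x hx_small hx_large
  refine ⟨x.2, liminf_coe_eq_zero ?_ fun ε hε => ?_, limsup_coe_eq_top fun c => ?_⟩
  · exact (htends.eventually_gt_atTop 0).mono fun n hn => by positivity
  · obtain ⟨p, hp⟩ := exists_nat_one_div_lt hε
    exact (hx_small p).mono fun _ h => h.trans hp
  · obtain ⟨p, hp⟩ := exists_nat_gt c
    exact (hx_large p).mono fun _ h => hp.trans h

lemma Emax_eq_empty_of_eventually_le (hpos : ∀ᶠ n in atTop, 0 < φ n) {C : ℝ}
    (hC : ∀ᶠ n : ℕ in atTop, (n : ℝ) ≤ C * φ n) : Emax φ = ∅ := by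
  refine eq_empty_iff_forall_notMem.2 fun x ⟨_, _, htop⟩ => EReal.coe_ne_top C ?_
  refine top_le_iff.1 (htop ▸ limsup_le_of_le (by isBoundedDefault) ?_)
  filter_upwards [hpos, hC] with n hφ hn
  exact EReal.coe_le_coe_iff.2 ((div_le_iff₀ hφ).2 ((Nat.cast_le.2 (runLen_le_self x n)).trans hn))

theorem Emax_residual_or_empty_general (φ : ℕ → ℝ)
    (htends : Tendsto φ atTop atTop) :
    ((↑) : Set.Icc (0 : ℝ) 1 → ℝ) ⁻¹' Emax φ ∈ residual (Set.Icc (0 : ℝ) 1) ∨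
      Emax φ = ∅ := by
  by_cases hbdd : ∃ C : ℝ, ∀ᶠ n : ℕ in atTop, (n : ℝ) ≤ C * φ n
  · obtain ⟨C, hC⟩ := hbdd
    exact Or.inr (Emax_eq_empty_of_eventually_le (htends.eventually_gt_atTop 0) hC)
  · simp only [not_exists, not_eventually, not_le] at hbdd
    exact Or.inl (preimage_Emax_mem_residual htends hbdd)

theorem Emax_residual_or_empty (φ : ℕ → ℝ) (hpos : ∀ n, 0 < φ n) (hmono : Monotone φ)
    (htends : Tendsto φ atTop atTop) :
    ((↑) : Set.Icc (0 : ℝ) 1 → ℝ) ⁻¹' Emax φ ∈ residual (Set.Icc (0 : ℝ) 1) ∨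
      Emax φ = ∅ :=
  Emax_residual_or_empty_general φ htends
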